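/- For F : ℝⁿ → ℝ differentiable with L-Lipschitz gradient, h : ℝᵈ → ℝ convex, matrices A ∈ ℝ^{p×n}, B ∈ ℝ^{p×d}, c ∈ ℝᵖ and ρ > 0, let L_ρ(x,y,λ) = F(x) + h(y) − ⟨λ, Ax + By − c⟩ + (ρ/2)‖Ax + By − c‖². Let Q ∈ ℝ^{n×n} be symmetric with φ_min‖w‖² ≤ ⟨w, Qw⟩ for all w ∈ ℝⁿ (φ_min > 0), let σ_A ≥ 0 satisfy σ_A‖w‖² ≤ ‖Aw‖² for all w ∈ ℝⁿ, and let H ∈ ℝ^{d×d} be symmetric with s_H‖w‖² ≤ ⟨w, Hw⟩ for all w ∈ ℝᵈ (s_H > 0). Fix x ∈ ℝⁿ, y ∈ ℝᵈ, λ ∈ ℝᵖ, v ∈ ℝⁿ, η > 0, ν > 0, ρ′ > 0. Suppose: (i) y₊ is a global minimizer of y′ ↦ L_ρ(x, y′, λ) + (1/2)⟨y′ − y, H(y′ − y)⟩; (ii) 0 = v − Aᵀλ + ρAᵀ(Ax₊ + By₊ − c) − ηQ(x − x₊); (iii) λ₊ = λ − ρ(Ax₊ + By₊ − c). Then L_{ρ′}(x₊,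 y₊, λ₊) ≤ L_ρ(x, y, λ) + (1/ρ + (ρ′ − ρ)/(2ρ²))·‖λ₊ − λ‖² + (ν/2)‖v − ∇F(x)‖² − s_H‖y₊ − y‖² − (ηφ_min + σ_Aρ/2 − L/2 − 1/(2ν))·‖x₊ − x‖². -/

import Mathlib

open Matrix
open scoped RealInnerProductSpace

/-- The action of a real matrix on Euclidean space. -/
noncomputable def mvec {m n : ℕ} (A : Matrix (Fin m) (Fin n) ℝ)
    (x : EuclideanSpace ℝ (Fin n)) : EuclideanSpace ℝ (Fin m) :=
  (WithLp.equiv 2 (Fin m → ℝ)).symm (A.mulVec ((WithLp.equiv 2 (Fin n → ℝ)) x))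

/-- The augmented Lagrangian `L_ρ(x, y, λ)` of the problem
`min F(x) + h(y)  s.t.  Ax + By = c`. -/
noncomputable def augLag {n d p : ℕ} (F : EuclideanSpace ℝ (Fin n) → ℝ)
    (h : EuclideanSpace ℝ (Fin d) → ℝ) (A : Matrix (Fin p) (Fin n) ℝ)
    (B : Matrix (Fin p) (Fin d) ℝ) (c : EuclideanSpace ℝ (Fin p)) (ρ : ℝ)
    (x : EuclideanSpace ℝ (Fin n)) (y : EuclideanSpace ℝ (Fin d))
    (lam : EuclideanSpace ℝ (Fin p)) : ℝ :=
  F x + h y - ⟪lam, mvec A x + mvec B y - c⟫ + (ρ / 2) * ‖mvec A x + mvec B y - c‖ ^ 2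

/-!
Each of the three updates is handled separately and the estimates add up.
The dual update with the penalty change from `ρ` to `ρ'` is an exact identity, since the new
residual is `-(λ₊ - λ) / ρ`. For the `x`-update, `L_ρ` is `F` plus a quadratic in `x`: the descent
lemma for `F` and the optimality condition (ii) tested against `x₊ - x` cancel all linear terms,
and Young's inequality absorbs the gradient error `v - ∇F(x)`. For the `y`-update, `L_ρ` is convex
in `y`, and comparing `y₊` with the points of the segment from `y₊` to `y` in the proximal
problem (i) shows that `L_ρ` decreases by at least `⟨y₊ - y, H(y₊ - y)⟩ ≥ s_H‖y₊ - y‖²`.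
-/

open Set Filter Topology

section Mvec

variable {m n : ℕ} (M : Matrix (Fin m) (Fin n) ℝ)

theorem mvec_eq_toEuclideanLin : mvec M = M.toEuclideanLin := rfl

theorem mvec_add (a b : EuclideanSpace ℝ (Fin n)) : mvec M (a + b) = mvec M a + mvec M b := by
  rw [mvec_eq_toEuclideanLin, map_add]

theorem mvec_sub (a b : EuclideanSpace ℝ (Fin n)) : mvec M (a - b) = mvec M a - mvec M b := by
  rw [mvec_eq_toEuclideanLin, map_sub]

theorem mvec_neg (a : EuclideanSpace ℝ (Fin n)) : mvec M (-a) = -mvec M a := by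
  rw [mvec_eq_toEuclideanLin, map_neg]

theorem mvec_smul (t : ℝ) (a : EuclideanSpace ℝ (Fin n)) : mvec M (t • a) = t • mvec M a := by
  rw [mvec_eq_toEuclideanLin, map_smul]

theorem inner_mvec_transpose (z : EuclideanSpace ℝ (Fin m)) (w : EuclideanSpace ℝ (Fin n)) :
    ⟪mvec Mᵀ z, w⟫ = ⟪z, mvec M w⟫ := by
  rw [mvec_eq_toEuclideanLin, mvec_eq_toEuclideanLin, ← conjTranspose_eq_transpose_of_trivial,
    toEuclideanLin_conjTranspose_eq_adjoint, LinearMap.adjoint_inner_left]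

end Mvec

section InnerProductSpace

variable {E : Type*} [NormedAddCommGroup E] [InnerProductSpace ℝ E]

theorem real_inner_le_half_mul_norm_sq_add {ν : ℝ} (hν : 0 < ν) (a b : E) :
    ⟪a, b⟫ ≤ ν / 2 * ‖a‖ ^ 2 + 1 / (2 * ν) * ‖b‖ ^ 2 := by
  have hsq : 0 ≤ (ν * ‖a‖ - ‖b‖) ^ 2 / (2 * ν) := by positivity
  have hexp : (ν * ‖a‖ - ‖b‖) ^ 2 / (2 * ν) =
      ν / 2 * ‖a‖ ^ 2 + 1 / (2 * ν) * ‖b‖ ^ 2 - ‖a‖ * ‖b‖ := by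
    field_simp
    ring
  linarith [real_inner_le_norm a b]

theorem HasGradientAt.hasDerivAt_comp_add_smul [CompleteSpace E] {F : E → ℝ} {g a d : E} {t : ℝ}
    (hF : HasGradientAt F g (a + t • d)) :
    HasDerivAt (fun s : ℝ => F (a + s • d)) ⟪g, d⟫ t := by
  have hline : HasDerivAt (fun s : ℝ => a + s • d) d t := by
    simpa using ((hasDerivAt_id t).smul_const d).const_add a
  simpa [Function.comp_def] using hF.hasFDerivAt.comp_hasDerivAt t hline

theorem apply_le_add_inner_add_half_mul_norm_sq [CompleteSpace E] {F : E → ℝ} {gradF : E → E}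
    (hgrad : ∀ z, HasGradientAt F (gradF z) z) {L : ℝ}
    (hlip : ∀ z z', ‖gradF z - gradF z'‖ ≤ L * ‖z - z'‖) (a b : E) :
    F b ≤ F a + ⟪gradF a, b - a⟫ + L / 2 * ‖b - a‖ ^ 2 := by
  set d := b - a
  let g : ℝ → ℝ := fun t => F (a + t • d) - t * ⟪gradF a, d⟫ - L / 2 * t ^ 2 * ‖d‖ ^ 2
  let g' : ℝ → ℝ := fun t => ⟪gradF (a + t • d) - gradF a, d⟫ - L * t * ‖d‖ ^ 2
  have hg : ∀ t, HasDerivAt g (g' t) t := fun t => by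
    refine (((hgrad (a + t • d)).hasDerivAt_comp_add_smul.sub
      ((hasDerivAt_id t).mul_const ⟪gradF a, d⟫)).sub
      (((hasDerivAt_pow 2 t).const_mul (L / 2)).mul_const (‖d‖ ^ 2))).congr_deriv ?_
    simp only [g', inner_sub_left]
    ring
  have hg'_nonpos : ∀ t ∈ interior (Icc (0 : ℝ) 1), g' t ≤ 0 := by
    intro t ht
    rw [interior_Icc] at ht
    have hinc : ‖(a + t • d) - a‖ = t * ‖d‖ := by
      rw [add_sub_cancel_left, norm_smul, Real.norm_of_nonneg ht.1.le]
    have := (real_inner_le_norm _ d).trans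
      (mul_le_mul_of_nonneg_right (hlip (a + t • d) a) (norm_nonneg d))
    rw [hinc] at this
    simp only [g']
    nlinarith
  have hanti : AntitoneOn g (Icc 0 1) :=
    antitoneOn_of_hasDerivWithinAt_nonpos (convex_Icc 0 1)
      (fun t _ => (hg t).continuousAt.continuousWithinAt)
      (fun t _ => (hg t).hasDerivWithinAt) hg'_nonpos
  have := hanti (left_mem_Icc.2 zero_le_one) (right_mem_Icc.2 zero_le_one) zero_le_one
  simp only [g, d, zero_smul, add_zero, one_smul, add_sub_cancel] at this
  linarith

end InnerProductSpace

theorem ConvexOn.add_le_of_forall_le_add_half {E : Type*} [AddCommGroup E] [Module ℝ E]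
    {g q : E → ℝ} (hg : ConvexOn ℝ univ g) (hq : ∀ (s : ℝ) w, q (s • w) = s ^ 2 * q w) {y z : E}
    (hz : ∀ z', g z + q (z - y) / 2 ≤ g z' + q (z' - y) / 2) :
    g z + q (z - y) ≤ g y := by
  -- Compare `z` with the points `(1 - t) • z + t • y` of the segment towards `y`, then let `t → 0`.
  have hseg : ∀ t ∈ Ioo (0 : ℝ) 1, g z + q (z - y) ≤ g y + t * q (z - y) / 2 := by
    rintro t ⟨ht0, ht1⟩
    have hmin := hz ((1 - t) • z + t • y)
    have hshift : (1 - t) • z + t • y - y = (1 - t) • (z - y) := by module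
    have hcvx := hg.2 (mem_univ z) (mem_univ y) (sub_nonneg.2 ht1.le) ht0.le (sub_add_cancel 1 t)
    rw [hshift, hq] at hmin
    have : t * (g z + q (z - y)) ≤ t * (g y + t * q (z - y) / 2) := by
      simp only [smul_eq_mul] at hcvx
      nlinarith
    exact le_of_mul_le_mul_left this ht0
  have hlim : Tendsto (fun t : ℝ => g y + t * q (z - y) / 2) (𝓝[>] 0) (𝓝 (g y)) := by
    refine tendsto_nhdsWithin_of_tendsto_nhds ?_
    exact (by fun_prop : Continuous fun t : ℝ => g y + t * q (z - y) / 2).tendsto' 0 _ (by simp)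
  exact ge_of_tendsto hlim (eventually_of_mem (Ioo_mem_nhdsGT one_pos) hseg)

section AugmentedLagrangian

variable {n d p : ℕ} {F : EuclideanSpace ℝ (Fin n) → ℝ} {h : EuclideanSpace ℝ (Fin d) → ℝ}
  {A : Matrix (Fin p) (Fin n) ℝ} {B : Matrix (Fin p) (Fin d) ℝ} {c : EuclideanSpace ℝ (Fin p)}
  {ρ : ℝ} {x : EuclideanSpace ℝ (Fin n)} {y : EuclideanSpace ℝ (Fin d)}
  {lam : EuclideanSpace ℝ (Fin p)}

theorem augLag_eq_of_dual_update (ρ' : ℝ) (hρ : ρ ≠ 0) {lamp : EuclideanSpace ℝ (Fin p)}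
    (hdual : lamp = lam - ρ • (mvec A x + mvec B y - c)) :
    augLag F h A B c ρ' x y lamp =
      augLag F h A B c ρ x y lam + (1 / ρ + (ρ' - ρ) / (2 * ρ ^ 2)) * ‖lamp - lam‖ ^ 2 := by
  unfold augLag
  set r := mvec A x + mvec B y - c
  have hnorm : ‖lamp - lam‖ ^ 2 = ρ ^ 2 * ‖r‖ ^ 2 := by
    rw [hdual, sub_sub_cancel_left, norm_neg, norm_smul, mul_pow, Real.norm_eq_abs, sq_abs]
  have hinner : ⟪lamp, r⟫ = ⟪lam, r⟫ - ρ * ‖r‖ ^ 2 := by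
    rw [hdual, inner_sub_left, real_inner_smul_left, real_inner_self_eq_norm_sq]
  rw [hnorm, hinner]
  field_simp
  ring

theorem convexOn_augLag_snd (hconv : ConvexOn ℝ univ h) (hρ : 0 ≤ ρ) :
    ConvexOn ℝ univ fun y => augLag F h A B c ρ x y lam := by
  refine ⟨convex_univ, fun y₁ _ y₂ _ a b ha hb hab => ?_⟩
  obtain rfl : b = 1 - a := by linarith
  unfold augLag
  set r₁ := mvec A x + mvec B y₁ - c
  set r₂ := mvec A x + mvec B y₂ - c
  have hres : mvec A x + mvec B (a • y₁ + (1 - a) • y₂) - c = a • r₁ + (1 - a) • r₂ := by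
    simp only [r₁, r₂, mvec_add, mvec_smul]
    module
  have hh := hconv.2 (mem_univ y₁) (mem_univ y₂) ha hb hab
  have hsq := ((convexOn_norm convex_univ).pow (fun _ _ => norm_nonneg _) 2).2
    (mem_univ r₁) (mem_univ r₂) ha hb hab
  simp only [Pi.pow_apply, smul_eq_mul] at hh hsq ⊢
  rw [hres, inner_add_right, real_inner_smul_right, real_inner_smul_right]
  have := mul_le_mul_of_nonneg_left hsq (by positivity : 0 ≤ ρ / 2)
  linear_combination hh + this

theorem augLag_le_of_y_update (hconv : ConvexOn ℝ univ h) (hρ : 0 ≤ ρ)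
    {H : Matrix (Fin d) (Fin d) ℝ} {sH : ℝ} (hH : ∀ w, sH * ‖w‖ ^ 2 ≤ ⟪w, mvec H w⟫)
    {yp : EuclideanSpace ℝ (Fin d)}
    (hymin : ∀ y', augLag F h A B c ρ x yp lam + (1 / 2) * ⟪yp - y, mvec H (yp - y)⟫ ≤
      augLag F h A B c ρ x y' lam + (1 / 2) * ⟪y' - y, mvec H (y' - y)⟫) :
    augLag F h A B c ρ x yp lam ≤ augLag F h A B c ρ x y lam - sH * ‖yp - y‖ ^ 2 := by
  have hq : ∀ (s : ℝ) w, ⟪s • w, mvec H (s • w)⟫ = s ^ 2 * ⟪w, mvec H w⟫ := fun s w => by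
    rw [mvec_smul, real_inner_smul_left, real_inner_smul_right]
    ring
  have hprox : augLag F h A B c ρ x yp lam + ⟪yp - y, mvec H (yp - y)⟫ ≤
      augLag F h A B c ρ x y lam :=
    (convexOn_augLag_snd hconv hρ).add_le_of_forall_le_add_half
      (q := fun w => ⟪w, mvec H w⟫) hq (fun y' => by linarith [hymin y'])
  linarith [hH (yp - y)]

theorem augLag_le_of_x_update {gradF : EuclideanSpace ℝ (Fin n) → EuclideanSpace ℝ (Fin n)}
    (hgrad : ∀ z, HasGradientAt F (gradF z) z) {L : ℝ}
    (hlip : ∀ z z', ‖gradF z - gradF z'‖ ≤ L * ‖z - z'‖)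
    {Q : Matrix (Fin n) (Fin n) ℝ} {φmin : ℝ} (hQ : ∀ w, φmin * ‖w‖ ^ 2 ≤ ⟪w, mvec Q w⟫)
    {σA : ℝ} (hA : ∀ w, σA * ‖w‖ ^ 2 ≤ ‖mvec A w‖ ^ 2) (hρ : 0 ≤ ρ)
    {v xp : EuclideanSpace ℝ (Fin n)} {η ν : ℝ} (hη : 0 ≤ η) (hν : 0 < ν)
    (hstat : (0 : EuclideanSpace ℝ (Fin n)) =
      v - mvec Aᵀ lam + ρ • mvec Aᵀ (mvec A xp + mvec B y - c) - η • mvec Q (x - xp)) :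
    augLag F h A B c ρ xp y lam ≤
      augLag F h A B c ρ x y lam + ν / 2 * ‖v - gradF x‖ ^ 2 -
        (η * φmin + σA * ρ / 2 - L / 2 - 1 / (2 * ν)) * ‖xp - x‖ ^ 2 := by
  unfold augLag
  set r := mvec A x + mvec B y - c
  set dx := xp - x
  have hr : mvec A xp + mvec B y - c = r + mvec A dx := by
    simp only [r, dx, mvec_sub]
    abel
  have hx : x - xp = -dx := (neg_sub xp x).symm
  have hstat_dx : ⟪lam, mvec A dx⟫ =
      ⟪v, dx⟫ + ρ * ⟪r, mvec A dx⟫ + ρ * ‖mvec A dx‖ ^ 2 + η * ⟪dx, mvec Q dx⟫ := by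
    have := congrArg (fun w => ⟪w, dx⟫) hstat
    simp only [inner_zero_left, hr, hx, mvec_neg, inner_sub_left, inner_add_left,
      real_inner_smul_left, inner_neg_left, inner_mvec_transpose, real_inner_self_eq_norm_sq] at this
    rw [real_inner_comm dx (mvec Q dx)] at this
    linarith
  have hdesc : F xp ≤ F x + ⟪gradF x, dx⟫ + L / 2 * ‖dx‖ ^ 2 :=
    apply_le_add_inner_add_half_mul_norm_sq hgrad hlip x xp
  have hyoung := real_inner_le_half_mul_norm_sq_add hν (gradF x - v) dx
  rw [inner_sub_left, norm_sub_rev] at hyoung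
  have hQdx := mul_le_mul_of_nonneg_left (hQ dx) hη
  have hAdx := mul_le_mul_of_nonneg_left (hA dx) (by positivity : 0 ≤ ρ / 2)
  rw [hr, inner_add_right, norm_add_sq_real]
  linarith

end AugmentedLagrangian

theorem stmt_6_general {n d p : ℕ} (F : EuclideanSpace ℝ (Fin n) → ℝ)
    (gradF : EuclideanSpace ℝ (Fin n) → EuclideanSpace ℝ (Fin n))
    (hgrad : ∀ z, HasGradientAt F (gradF z) z)
    (L : ℝ)
    (hlip : ∀ z z', ‖gradF z - gradF z'‖ ≤ L * ‖z - z'‖)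
    (h : EuclideanSpace ℝ (Fin d) → ℝ) (hconv : ConvexOn ℝ Set.univ h)
    (A : Matrix (Fin p) (Fin n) ℝ) (B : Matrix (Fin p) (Fin d) ℝ)
    (c : EuclideanSpace ℝ (Fin p)) (ρ : ℝ) (hρ : 0 < ρ)
    (Q : Matrix (Fin n) (Fin n) ℝ)
    (φmin : ℝ)
    (hQ : ∀ w : EuclideanSpace ℝ (Fin n), φmin * ‖w‖ ^ 2 ≤ ⟪w, mvec Q w⟫)
    (σA : ℝ)
    (hA : ∀ w : EuclideanSpace ℝ (Fin n), σA * ‖w‖ ^ 2 ≤ ‖mvec A w‖ ^ 2)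
    (H : Matrix (Fin d) (Fin d) ℝ)
    (sH : ℝ)
    (hH : ∀ w : EuclideanSpace ℝ (Fin d), sH * ‖w‖ ^ 2 ≤ ⟪w, mvec H w⟫)
    (x : EuclideanSpace ℝ (Fin n)) (y : EuclideanSpace ℝ (Fin d))
    (lam : EuclideanSpace ℝ (Fin p)) (v : EuclideanSpace ℝ (Fin n))
    (η ν ρ' : ℝ) (hη : 0 < η) (hν : 0 < ν)
    (yp : EuclideanSpace ℝ (Fin d)) (xp : EuclideanSpace ℝ (Fin n))
    (lamp : EuclideanSpace ℝ (Fin p))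
    (hymin : ∀ y' : EuclideanSpace ℝ (Fin d),
      augLag F h A B c ρ x yp lam + (1 / 2) * ⟪yp - y, mvec H (yp - y)⟫ ≤
        augLag F h A B c ρ x y' lam + (1 / 2) * ⟪y' - y, mvec H (y' - y)⟫)
    (hstat : (0 : EuclideanSpace ℝ (Fin n)) =
      v - mvec Aᵀ lam + ρ • mvec Aᵀ (mvec A xp + mvec B yp - c) - η • mvec Q (x - xp))
    (hdual : lamp = lam - ρ • (mvec A xp + mvec B yp - c)) :
    augLag F h A B c ρ' xp yp lamp ≤
      augLag F h A B c ρ x y lam +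
        (1 / ρ + (ρ' - ρ) / (2 * ρ ^ 2)) * ‖lamp - lam‖ ^ 2 +
        (ν / 2) * ‖v - gradF x‖ ^ 2 - sH * ‖yp - y‖ ^ 2 -
        (η * φmin + σA * ρ / 2 - L / 2 - 1 / (2 * ν)) * ‖xp - x‖ ^ 2 := by
  rw [augLag_eq_of_dual_update ρ' hρ.ne' hdual]
  have hx_step := augLag_le_of_x_update (h := h) hgrad hlip hQ hA hρ.le hη.le hν hstat
  have hy_step := augLag_le_of_y_update hconv hρ.le hH hymin
  linarith

theorem stmt_6 {n d p : ℕ} (F : EuclideanSpace ℝ (Fin n) → ℝ)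
    (gradF : EuclideanSpace ℝ (Fin n) → EuclideanSpace ℝ (Fin n))
    (hgrad : ∀ z, HasGradientAt F (gradF z) z)
    (L : ℝ) (hL : 0 ≤ L)
    (hlip : ∀ z z', ‖gradF z - gradF z'‖ ≤ L * ‖z - z'‖)
    (h : EuclideanSpace ℝ (Fin d) → ℝ) (hconv : ConvexOn ℝ Set.univ h)
    (A : Matrix (Fin p) (Fin n) ℝ) (B : Matrix (Fin p) (Fin d) ℝ)
    (c : EuclideanSpace ℝ (Fin p)) (ρ : ℝ) (hρ : 0 < ρ)
    (Q : Matrix (Fin n) (Fin n) ℝ) (hQsymm : Q.IsSymm)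
    (φmin : ℝ) (hφmin : 0 < φmin)
    (hQ : ∀ w : EuclideanSpace ℝ (Fin n), φmin * ‖w‖ ^ 2 ≤ ⟪w, mvec Q w⟫)
    (σA : ℝ) (hσA : 0 ≤ σA)
    (hA : ∀ w : EuclideanSpace ℝ (Fin n), σA * ‖w‖ ^ 2 ≤ ‖mvec A w‖ ^ 2)
    (H : Matrix (Fin d) (Fin d) ℝ) (hHsymm : H.IsSymm)
    (sH : ℝ) (hsH : 0 < sH)
    (hH : ∀ w : EuclideanSpace ℝ (Fin d), sH * ‖w‖ ^ 2 ≤ ⟪w, mvec H w⟫)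
    (x : EuclideanSpace ℝ (Fin n)) (y : EuclideanSpace ℝ (Fin d))
    (lam : EuclideanSpace ℝ (Fin p)) (v : EuclideanSpace ℝ (Fin n))
    (η ν ρ' : ℝ) (hη : 0 < η) (hν : 0 < ν) (hρ' : 0 < ρ')
    (yp : EuclideanSpace ℝ (Fin d)) (xp : EuclideanSpace ℝ (Fin n))
    (lamp : EuclideanSpace ℝ (Fin p))
    (hymin : ∀ y' : EuclideanSpace ℝ (Fin d),
      augLag F h A B c ρ x yp lam + (1 / 2) * ⟪yp - y, mvec H (yp - y)⟫ ≤
        augLag F h A B c ρ x y' lam + (1 / 2) * ⟪y' - y, mvec H (y' - y)⟫)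
    (hstat : (0 : EuclideanSpace ℝ (Fin n)) =
      v - mvec Aᵀ lam + ρ • mvec Aᵀ (mvec A xp + mvec B yp - c) - η • mvec Q (x - xp))
    (hdual : lamp = lam - ρ • (mvec A xp + mvec B yp - c)) :
    augLag F h A B c ρ' xp yp lamp ≤
      augLag F h A B c ρ x y lam +
        (1 / ρ + (ρ' - ρ) / (2 * ρ ^ 2)) * ‖lamp - lam‖ ^ 2 +
        (ν / 2) * ‖v - gradF x‖ ^ 2 - sH * ‖yp - y‖ ^ 2 -
        (η * φmin + σA * ρ / 2 - L / 2 - 1 / (2 * ν)) * ‖xp - x‖ ^ 2 :=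
  stmt_6_general F gradF hgrad L hlip h hconv A B c ρ hρ Q φmin hQ σA hA H sH hH x y lam v η ν ρ' hη
    hν yp xp lamp hymin hstat hdual
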